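/- The modal logics KT and KTB enjoy ULIP; moreover, in each of these logics L, for every formula φ and all finite sets P, Q of propositional variables there exists a uniform Lyndon interpolant θ of (φ,P,Q) in L with d(θ) ≤ d(φ). -/

import Mathlib

/-- Modal formulas: propositional variables, ⊥, →, □. -/
inductive Formula : Type
  | var : ℕ → Formula
  | bot : Formula
  | imp : Formula → Formula → Formula
  | box : Formula → Formula
  deriving DecidableEq

namespace Formula

def neg (φ : Formula) : Formula := φ.imp bot

def top : Formula := neg bot

def and (φ ψ : Formula) : Formula := (φ.imp ψ.neg).neg

def iff (φ ψ : Formula) : Formula := (φ.imp ψ).and (ψ.imp φ)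

def dia (φ : Formula) : Formula := φ.neg.box.neg

/-- Variables occurring positively (`true`) / negatively (`false`). -/
def vsgn : Formula → Bool → Finset ℕ
  | var p, true => {p}
  | var _, false => ∅
  | bot, _ => ∅
  | imp φ ψ, b => vsgn φ (!b) ∪ vsgn ψ b
  | box φ, b => vsgn φ b

def vpos (φ : Formula) : Finset ℕ := vsgn φ true
def vneg (φ : Formula) : Finset ℕ := vsgn φ false
def vars (φ : Formula) : Finset ℕ := vpos φ ∪ vneg φ

/-- Modal depth. -/
def depth : Formula → ℕ
  | var _ => 0
  | bot => 0
  | imp φ ψ => max (depth φ) (depth ψ)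
  | box φ => depth φ + 1

/-- Uniform substitution. -/
def subst (σ : ℕ → Formula) : Formula → Formula
  | var p => σ p
  | bot => bot
  | imp φ ψ => (subst σ φ).imp (subst σ ψ)
  | box φ => (subst σ φ).box

/-- The set of subformulas. -/
def subfmls : Formula → Finset Formula
  | var p => {var p}
  | bot => {bot}
  | imp φ ψ => insert (imp φ ψ) (subfmls φ ∪ subfmls ψ)
  | box φ => insert (box φ) (subfmls φ)

/-- n(φ) = |{ψ : □ψ ∈ Sub(φ)}|. -/
def boxCount (φ : Formula) : ℕ :=
  ((subfmls φ).filter fun ψ => box ψ ∈ subfmls φ).card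

/-- The translation ⋆ : p⋆ = p, ⊥⋆ = ⊥, (φ→ψ)⋆ = φ⋆→ψ⋆, (□φ)⋆ = φ⋆ ∧ □φ⋆. -/
def star : Formula → Formula
  | var p => var p
  | bot => bot
  | imp φ ψ => (star φ).imp (star ψ)
  | box φ => (star φ).and (star φ).box

end Formula

/-- Propositional tautology: true under every valuation treating variables and
boxed formulas as atoms. -/
def Tautology (φ : Formula) : Prop :=
  ∀ v : Formula → Bool, v .bot = false →
    (∀ ψ θ : Formula, v (ψ.imp θ) = (!v ψ || v θ)) → v φ = true

/-- A normal modal logic: contains all tautologies and □(p→q)→(□p→□q), and is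
closed under modus ponens, necessitation and uniform substitution. -/
structure IsNormal (L : Set Formula) : Prop where
  taut : ∀ φ, Tautology φ → φ ∈ L
  axK : ((Formula.var 0).imp (Formula.var 1)).box.imp
      ((Formula.var 0).box.imp (Formula.var 1).box) ∈ L
  mp : ∀ φ ψ : Formula, φ.imp ψ ∈ L → φ ∈ L → ψ ∈ L
  nec : ∀ φ : Formula, φ ∈ L → φ.box ∈ L
  subst_mem : ∀ φ ∈ L, ∀ σ : ℕ → Formula, Formula.subst σ φ ∈ L

/-- The least normal modal logic including `X`. -/
def NormalExt (X : Set Formula) : Set Formula :=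
  ⋂₀ {L : Set Formula | IsNormal L ∧ X ⊆ L}

/-- The least normal modal logic K. -/
def TheoryK : Set Formula := NormalExt ∅

def axT : Formula := (Formula.var 0).box.imp (Formula.var 0)
def ax4 : Formula := (Formula.var 0).box.imp (Formula.var 0).box.box
def axB : Formula := (Formula.var 0).imp (Formula.var 0).dia.box
def axD : Formula := Formula.bot.box.neg
def axGL : Formula := ((Formula.var 0).box.imp (Formula.var 0)).box.imp (Formula.var 0).box
def axGrz : Formula :=
  (((Formula.var 0).imp (Formula.var 0).box).box.imp (Formula.var 0)).box.imp (Formula.var 0)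

def TheoryKD : Set Formula := NormalExt {axD}
def TheoryKT : Set Formula := NormalExt {axT}
def TheoryKB : Set Formula := NormalExt {axB}
def TheoryKDB : Set Formula := NormalExt {axD, axB}
def TheoryKTB : Set Formula := NormalExt {axT, axB}
def TheoryK4 : Set Formula := NormalExt {ax4}
def TheoryS4 : Set Formula := NormalExt {axT, ax4}
def TheoryGL : Set Formula := NormalExt {axGL}
def TheoryGrz : Set Formula := NormalExt {axGrz}

/-- L⋆ := {φ : L ⊢ φ⋆}. -/
def starLogic (L : Set Formula) : Set Formula := {φ | Formula.star φ ∈ L}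

/-- θ is a uniform Lyndon interpolant of (φ, P, Q) in L. -/
def IsULInterpolant (L : Set Formula) (φ : Formula) (P Q : Finset ℕ) (θ : Formula) : Prop :=
  θ.vpos ⊆ φ.vpos \ P ∧ θ.vneg ⊆ φ.vneg \ Q ∧ φ.imp θ ∈ L ∧
    ∀ ψ : Formula, ψ.vpos ∩ P = ∅ → ψ.vneg ∩ Q = ∅ → φ.imp ψ ∈ L → θ.imp ψ ∈ L

/-- The uniform Lyndon interpolation property. -/
def ULIP (L : Set Formula) : Prop :=
  ∀ (φ : Formula) (P Q : Finset ℕ), ∃ θ : Formula, IsULInterpolant L φ P Q θ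

/-- The uniform interpolation property. -/
def UIP (L : Set Formula) : Prop :=
  ∀ (φ : Formula) (P : Finset ℕ), ∃ θ : Formula,
    θ.vars ⊆ φ.vars \ P ∧ φ.imp θ ∈ L ∧
      ∀ ψ : Formula, ψ.vars ∩ P = ∅ → φ.imp ψ ∈ L → θ.imp ψ ∈ L

/-- The Lyndon interpolation property. -/
def LIP (L : Set Formula) : Prop :=
  ∀ φ ψ : Formula, φ.imp ψ ∈ L → ∃ θ : Formula,
    θ.vpos ⊆ φ.vpos ∩ ψ.vpos ∧ θ.vneg ⊆ φ.vneg ∩ ψ.vneg ∧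
      φ.imp θ ∈ L ∧ θ.imp ψ ∈ L

/-- A Kripke model. -/
structure KripkeModel where
  W : Type
  nonempty : Nonempty W
  rel : W → W → Prop
  val : W → ℕ → Prop

/-- Satisfaction in a Kripke model. -/
def KripkeModel.Sat (M : KripkeModel) : Formula → M.W → Prop
  | .var p, w => M.val w p
  | .bot, _ => False
  | .imp φ ψ, w => M.Sat φ w → M.Sat ψ w
  | .box φ, w => ∀ x, M.rel w x → M.Sat φ x

/-- A (P,Q)-formula: v⁺(φ) ⊆ P and v⁻(φ) ⊆ Q. -/
def PQFormula (P Q : Finset ℕ) (φ : Formula) : Prop := φ.vpos ⊆ P ∧ φ.vneg ⊆ Q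

/-- `F n P Q` is a finite list of (P,Q)-formulas of modal depth ≤ n such that every
(P,Q)-formula of modal depth ≤ n is K-provably equivalent to some member. -/
def IsFamily (F : ℕ → Finset ℕ → Finset ℕ → List Formula) : Prop :=
  ∀ (n : ℕ) (P Q : Finset ℕ),
    (∀ φ ∈ F n P Q, PQFormula P Q φ ∧ φ.depth ≤ n) ∧
    ∀ ψ : Formula, PQFormula P Q ψ → ψ.depth ≤ n →
      ∃ φ ∈ F n P Q, Formula.iff φ ψ ∈ TheoryK

/-- Th_n^{(P,Q)}(w) = {φ ∈ F_n^{(P,Q)} : w ⊩ φ}. -/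
def Th (F : ℕ → Finset ℕ → Finset ℕ → List Formula) (M : KripkeModel)
    (n : ℕ) (P Q : Finset ℕ) (w : M.W) : Set Formula :=
  {φ | φ ∈ F n P Q ∧ M.Sat φ w}

def conjList : List Formula → Formula
  | [] => Formula.top
  | φ :: l => φ.and (conjList l)

open Classical in
/-- C_n^{(P,Q)}(w) = ⋀ Th_n^{(P,Q)}(w). -/
noncomputable def Cfml (F : ℕ → Finset ℕ → Finset ℕ → List Formula) (M : KripkeModel)
    (n : ℕ) (P Q : Finset ℕ) (w : M.W) : Formula :=
  conjList ((F n P Q).filter fun φ => decide (M.Sat φ w))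

/-- Layered (P,Q)-bisimulation between M and M'. -/
def LayeredBisim (P Q : Finset ℕ) (M M' : KripkeModel)
    (Z : M.W → ℕ → M'.W → Prop) : Prop :=
  (∀ w n w', Z w n w' →
    (∀ p ∈ P, M.val w p → M'.val w' p) ∧ (∀ q ∈ Q, ¬M.val w q → ¬M'.val w' q)) ∧
  (∀ w n w', Z w (n + 1) w' → ∀ x, M.rel w x → ∃ x', M'.rel w' x' ∧ Z x n x') ∧
  (∀ w n w', Z w (n + 1) w' → ∀ x', M'.rel w' x' → ∃ x, M.rel w x ∧ Z x n x')

/-- Downward closedness of a layered bisimulation. -/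
def DownClosed (M M' : KripkeModel) (Z : M.W → ℕ → M'.W → Prop) : Prop :=
  ∀ w n w', Z w n w' → ∀ m ≤ n, Z w m w'

/-- A class of Kripke models has ULIP. -/
def ClassULIP (F : ℕ → Finset ℕ → Finset ℕ → List Formula) (Cl : Set KripkeModel) : Prop :=
  ∀ P1 P2 P3 Q1 Q2 Q3 : Finset ℕ,
    Disjoint P1 P2 → Disjoint P1 P3 → Disjoint P2 P3 →
    Disjoint Q1 Q2 → Disjoint Q1 Q3 → Disjoint Q2 Q3 →
    ∀ M : KripkeModel, M ∈ Cl → ∀ M' : KripkeModel, M' ∈ Cl →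
    ∀ w : M.W, ∀ w' : M'.W, ∀ m n : ℕ,
      Th F M n P2 Q2 w ⊆ Th F M' n P2 Q2 w' →
      ∃ Mst : KripkeModel, Mst ∈ Cl ∧ ∃ wst : Mst.W,
        Th F M n (P1 ∪ P2) (Q1 ∪ Q2) w ⊆ Th F Mst n (P1 ∪ P2) (Q1 ∪ Q2) wst ∧
        Th F Mst m (P2 ∪ P3) (Q2 ∪ Q3) wst ⊆ Th F M' m (P2 ∪ P3) (Q2 ∪ Q3) w'

/-!
KT and KTB are sound and complete for reflexive, respectively reflexive and symmetric, Kripke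
models. For `φ` of depth `n`, the interpolant is the disjunction of the depth-`n`
characteristic formulas over `(v⁺(φ) ∖ P, v⁻(φ) ∖ Q)` of all worlds of such models at which `φ`
holds; there are only finitely many such formulas. If `N, v` satisfies the one of `M, w`, then
`w` and `v` are related by an `n`-layered bisimulation. Amalgamating `M` and `N` along it gives
a model of the class with a world that agrees with `w` on `(v⁺(φ), v⁻(φ))`-formulas of depth at
most `n` and with `v` on the formulas `ψ` allowed as consequences, so `⊢ φ → ψ` forces
`N, v ⊨ ψ`.
-/

open Formula KripkeModel

def disjList : List Formula → Formula
  | [] => bot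
  | φ :: l => φ.neg.imp (disjList l)

namespace KripkeModel

variable {M : KripkeModel} {w : M.W} {φ ψ : Formula}

@[simp] lemma sat_imp : M.Sat (φ.imp ψ) w ↔ (M.Sat φ w → M.Sat ψ w) := Iff.rfl

@[simp] lemma sat_box : M.Sat φ.box w ↔ ∀ x, M.rel w x → M.Sat φ x := Iff.rfl

@[simp] lemma sat_neg : M.Sat φ.neg w ↔ ¬ M.Sat φ w := Iff.rfl

@[simp] lemma sat_and : M.Sat (φ.and ψ) w ↔ M.Sat φ w ∧ M.Sat ψ w := by
  simp only [Formula.and, sat_neg, sat_imp]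
  tauto

@[simp] lemma sat_dia : M.Sat φ.dia w ↔ ∃ x, M.rel w x ∧ M.Sat φ x := by
  simp [Formula.dia]

lemma sat_conjList {l : List Formula} : M.Sat (conjList l) w ↔ ∀ φ ∈ l, M.Sat φ w := by
  induction l with
  | nil => exact iff_of_true id (by simp)
  | cons φ l ih => simp [conjList, ih]

lemma sat_disjList {l : List Formula} : M.Sat (disjList l) w ↔ ∃ φ ∈ l, M.Sat φ w := by
  induction l with
  | nil => simp [disjList, KripkeModel.Sat]
  | cons φ l ih =>
    rw [disjList, sat_imp, sat_neg, ih, List.exists_mem_cons_iff, or_iff_not_imp_left]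

end KripkeModel

section PQFormula

variable {φ ψ : Formula} {A B : Finset ℕ}

lemma pqFormula_var {p : ℕ} : PQFormula A B (var p) ↔ p ∈ A := by
  simp [PQFormula, vpos, vneg, vsgn]

lemma pqFormula_bot : PQFormula A B bot := by
  simp [PQFormula, vpos, vneg, vsgn]

lemma pqFormula_imp : PQFormula A B (φ.imp ψ) ↔ PQFormula B A φ ∧ PQFormula A B ψ := by
  simp only [PQFormula, vpos, vneg, vsgn, Bool.not_true, Bool.not_false,
    Finset.union_subset_iff]
  tauto

lemma pqFormula_box : PQFormula A B φ.box ↔ PQFormula A B φ := Iff.rfl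

lemma pqFormula_neg : PQFormula A B φ.neg ↔ PQFormula B A φ := by
  simp [Formula.neg, pqFormula_imp, pqFormula_bot]

lemma pqFormula_and : PQFormula A B (φ.and ψ) ↔ PQFormula A B φ ∧ PQFormula A B ψ := by
  simp [Formula.and, pqFormula_neg, pqFormula_imp]

lemma pqFormula_dia : PQFormula A B φ.dia ↔ PQFormula A B φ := by
  simp [Formula.dia, pqFormula_neg, pqFormula_box]

lemma pqFormula_conjList {l : List Formula} (h : ∀ φ ∈ l, PQFormula A B φ) :
    PQFormula A B (conjList l) := by
  induction l with
  | nil => exact pqFormula_neg.2 pqFormula_bot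
  | cons φ l ih => simp_all [conjList, pqFormula_and]

lemma pqFormula_disjList {l : List Formula} (h : ∀ φ ∈ l, PQFormula A B φ) :
    PQFormula A B (disjList l) := by
  induction l with
  | nil => exact pqFormula_bot
  | cons φ l ih => simp_all [disjList, pqFormula_imp, pqFormula_neg]

end PQFormula

namespace Formula

variable {φ ψ : Formula}

@[simp] lemma depth_neg : φ.neg.depth = φ.depth := by
  simp [Formula.neg, depth]

@[simp] lemma depth_and : (φ.and ψ).depth = max φ.depth ψ.depth := by
  simp [Formula.and, depth]

@[simp] lemma depth_dia : φ.dia.depth = φ.depth + 1 := by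
  simp [Formula.dia, depth]

lemma depth_conjList_le {l : List Formula} {n : ℕ} (h : ∀ φ ∈ l, φ.depth ≤ n) :
    (conjList l).depth ≤ n := by
  induction l with
  | nil => simp [conjList, top, depth]
  | cons φ l ih => simp_all [conjList]

lemma depth_disjList_le {l : List Formula} {n : ℕ} (h : ∀ φ ∈ l, φ.depth ≤ n) :
    (disjList l).depth ≤ n := by
  induction l with
  | nil => simp [disjList, depth]
  | cons φ l ih => simp_all [disjList, depth]

end Formula

def lImp : List Formula → Formula → Formula
  | [], χ => χ
  | φ :: l, χ => φ.imp (lImp l χ)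

lemma eval_lImp {v : Formula → Bool}
    (himp : ∀ a b, v (a.imp b) = true ↔ (v a = true → v b = true)) (l : List Formula)
    (χ : Formula) : v (lImp l χ) = true ↔ ((∀ a ∈ l, v a = true) → v χ = true) := by
  induction l with
  | nil => simp [lImp]
  | cons a l ih =>
    simp only [lImp, himp, ih, List.forall_mem_cons]
    tauto

namespace IsNormal

variable {L : Set Formula} (hL : IsNormal L)
include hL

lemma mem_of_taut {φ : Formula}
    (H : ∀ v : Formula → Bool, v bot = false →
      (∀ a b, v (a.imp b) = true ↔ (v a = true → v b = true)) → v φ = true) : φ ∈ L :=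
  hL.taut φ fun v h0 h1 => H v h0 fun a b => by
    rw [h1]
    cases v a <;> cases v b <;> simp

lemma imp_self_mem (φ : Formula) : φ.imp φ ∈ L :=
  hL.mem_of_taut fun _ _ himp => (himp _ _).2 id

lemma neg_neg_imp_mem (φ : Formula) : φ.neg.neg.imp φ ∈ L := by
  refine hL.mem_of_taut fun v h0 himp => ?_
  simp only [himp, Formula.neg, h0]
  cases v φ <;> simp

lemma axK_mem (φ ψ : Formula) : (φ.imp ψ).box.imp (φ.box.imp ψ.box) ∈ L := by
  simpa [subst] using hL.subst_mem _ hL.axK fun n => if n = 0 then φ else ψ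

lemma box_mono {φ ψ : Formula} (h : φ.imp ψ ∈ L) : φ.box.imp ψ.box ∈ L :=
  hL.mp _ _ (hL.axK_mem φ ψ) (hL.nec _ h)

lemma box_lImp_mem (l : List Formula) (χ : Formula) :
    (lImp l χ).box.imp (lImp (l.map box) χ.box) ∈ L := by
  induction l with
  | nil => exact hL.imp_self_mem _
  | cons a l ih =>
    have hchain : ∀ X Y Z W : Formula,
        (X.imp (Y.imp Z)).imp ((Z.imp W).imp (X.imp (Y.imp W))) ∈ L := fun X Y Z W =>
      hL.mem_of_taut fun v _ himp => by simp only [himp]; tauto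
    exact hL.mp _ _ (hL.mp _ _ (hchain _ _ _ _) (hL.axK_mem a (lImp l χ))) ih

end IsNormal

def Derives (L Γ : Set Formula) (φ : Formula) : Prop :=
  ∃ l : List Formula, (∀ a ∈ l, a ∈ Γ) ∧ lImp l φ ∈ L

def Consistent (L Γ : Set Formula) : Prop := ¬ Derives L Γ bot

def MaxConsistent (L Δ : Set Formula) : Prop :=
  Consistent L Δ ∧ ∀ φ, Consistent L (insert φ Δ) → φ ∈ Δ

namespace Derives

variable {L Γ : Set Formula} {φ ψ : Formula}

lemma of_mem_logic (h : φ ∈ L) : Derives L Γ φ := ⟨[], by simp, h⟩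

lemma of_mem (hL : IsNormal L) (h : φ ∈ Γ) : Derives L Γ φ :=
  ⟨[φ], by simpa using h, hL.imp_self_mem φ⟩

lemma mem_logic_of_empty (h : Derives L ∅ φ) : φ ∈ L := by
  obtain ⟨l, hl, hφ⟩ := h
  rwa [List.eq_nil_iff_forall_not_mem.2 hl] at hφ

lemma mp (hL : IsNormal L) (h₁ : Derives L Γ (φ.imp ψ)) (h₂ : Derives L Γ φ) :
    Derives L Γ ψ := by
  obtain ⟨l₁, hl₁, h₁⟩ := h₁
  obtain ⟨l₂, hl₂, h₂⟩ := h₂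
  refine ⟨l₁ ++ l₂, fun a ha => (List.mem_append.1 ha).elim (hl₁ a) (hl₂ a), ?_⟩
  refine hL.mp _ _ (hL.mp _ _ (hL.mem_of_taut fun v _ himp => ?_) h₁) h₂
  simp only [himp, eval_lImp himp, List.mem_append]
  intro h₁ h₂ hall
  exact h₁ (fun a ha => hall a (.inl ha)) (h₂ fun a ha => hall a (.inr ha))

lemma imp_of_insert (hL : IsNormal L) (h : Derives L (insert φ Γ) ψ) :
    Derives L Γ (φ.imp ψ) := by
  obtain ⟨l, hl, hψ⟩ := h
  refine ⟨l.filter (· ≠ φ), fun a ha => ?_,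
    hL.mp _ _ (hL.mem_of_taut fun v _ himp => ?_) hψ⟩
  · simp only [List.mem_filter, decide_eq_true_eq] at ha
    exact (hl a ha.1).resolve_left ha.2
  · simp only [himp, eval_lImp himp, List.mem_filter, decide_eq_true_eq]
    intro h hall hφ
    exact h fun a ha => if hφa : a = φ then hφa ▸ hφ else hall a ⟨ha, hφa⟩

lemma of_bot (hL : IsNormal L) (h : Derives L Γ bot) : Derives L Γ φ :=
  (of_mem_logic (hL.mem_of_taut fun v h0 himp => by simp [himp, h0])).mp hL h

lemma box (hL : IsNormal L) {Δ : Set Formula} (h : Derives L {ψ | ψ.box ∈ Δ} φ) :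
    Derives L Δ φ.box := by
  obtain ⟨l, hl, hφ⟩ := h
  exact ⟨l.map Formula.box, by simpa using hl, hL.mp _ _ (hL.box_lImp_mem l φ) (hL.nec _ hφ)⟩

end Derives

namespace MaxConsistent

variable {L Δ : Set Formula} {φ ψ : Formula} (hL : IsNormal L) (hΔ : MaxConsistent L Δ)
include hL hΔ

lemma mem_of_derives (h : Derives L Δ φ) : φ ∈ Δ :=
  hΔ.2 φ fun hins => hΔ.1 ((hins.imp_of_insert hL).mp hL h)

lemma mem_of_mem_logic (h : φ ∈ L) : φ ∈ Δ :=
  hΔ.mem_of_derives hL (.of_mem_logic h)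

lemma neg_mem_iff : φ.neg ∈ Δ ↔ φ ∉ Δ := by
  refine ⟨fun hn hφ => hΔ.1 ((Derives.of_mem hL hn).mp hL (.of_mem hL hφ)), fun hφ => ?_⟩
  have hins : Derives L (insert φ Δ) bot := not_not.1 (mt (hΔ.2 φ) hφ)
  exact hΔ.mem_of_derives hL (hins.imp_of_insert hL)

lemma imp_mem_iff : φ.imp ψ ∈ Δ ↔ (φ ∈ Δ → ψ ∈ Δ) := by
  refine ⟨fun h hφ => hΔ.mem_of_derives hL ((Derives.of_mem hL h).mp hL (.of_mem hL hφ)),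
    fun h => hΔ.mem_of_derives hL (Derives.imp_of_insert hL ?_)⟩
  by_cases hφ : φ ∈ Δ
  · exact .of_mem hL (Set.mem_insert_of_mem _ (h hφ))
  · exact .of_bot hL (not_not.1 (mt (hΔ.2 φ) hφ))

end MaxConsistent

lemma exists_maxConsistent_superset {L Γ : Set Formula} (hΓ : Consistent L Γ) :
    ∃ Δ, MaxConsistent L Δ ∧ Γ ⊆ Δ := by
  obtain ⟨Δ, hΓΔ, hmax⟩ := zorn_subset_nonempty {Δ | Consistent L Δ}
    (fun c hc hchain hne => ⟨⋃₀ c, fun ⟨l, hl, hbot⟩ => by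
      obtain ⟨Δ, hΔ, hlΔ⟩ :=
        hchain.directedOn.exists_mem_subset_of_finite_of_subset_sUnion hne l.finite_toSet hl
      exact hc hΔ ⟨l, hlΔ, hbot⟩, fun _ => Set.subset_sUnion_of_mem⟩) Γ hΓ
  exact ⟨Δ, ⟨hmax.prop, fun φ hφ =>
    (hmax.eq_of_subset hφ (Set.subset_insert φ Δ)).symm ▸ Set.mem_insert φ Δ⟩, hΓΔ⟩

/-- `Δ₀` only witnesses that the model is nonempty. -/
def canonicalModel (L : Set Formula) (Δ₀ : {Δ // MaxConsistent L Δ}) : KripkeModel where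
  W := {Δ // MaxConsistent L Δ}
  nonempty := ⟨Δ₀⟩
  rel Δ Θ := ∀ φ, φ.box ∈ Δ.1 → φ ∈ Θ.1
  val Δ p := var p ∈ Δ.1

lemma sat_canonicalModel_iff {L : Set Formula} (hL : IsNormal L)
    {Δ₀ : {Δ // MaxConsistent L Δ}} (φ : Formula) (Δ : (canonicalModel L Δ₀).W) :
    (canonicalModel L Δ₀).Sat φ Δ ↔ φ ∈ Δ.1 := by
  induction φ generalizing Δ with
  | var p => rfl
  | bot => exact iff_of_false id fun h => Δ.2.1 (.of_mem hL h)
  | imp φ ψ ihφ ihψ => rw [sat_imp, ihφ, ihψ, Δ.2.imp_mem_iff hL]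
  | box φ ih =>
    refine ⟨fun hsat => by_contra fun hbox => ?_,
      fun hbox Θ hΔΘ => (ih Θ).2 (hΔΘ φ hbox)⟩
    have hcon : Consistent L (insert φ.neg {ψ | ψ.box ∈ Δ.1}) := fun hins =>
      hbox (Δ.2.mem_of_derives hL (Derives.box hL
        ((Derives.of_mem_logic (hL.neg_neg_imp_mem φ)).mp hL (hins.imp_of_insert hL))))
    obtain ⟨Θ, hΘ, hsub⟩ := exists_maxConsistent_superset hcon
    have hφ : φ ∈ Θ :=
      (ih ⟨Θ, hΘ⟩).1 (hsat ⟨Θ, hΘ⟩ fun ψ hψ => hsub (Set.mem_insert_of_mem _ hψ))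
    exact (hΘ.neg_mem_iff hL).1 (hsub (Set.mem_insert _ _)) hφ

theorem mem_of_forall_sat {L : Set Formula} (hL : IsNormal L) {C : Set KripkeModel}
    (hC : ∀ Δ₀, canonicalModel L Δ₀ ∈ C) {φ : Formula}
    (h : ∀ M ∈ C, ∀ w : M.W, M.Sat φ w) : φ ∈ L := by
  by_contra hφ
  have hcon : Consistent L (insert φ.neg ∅) := fun hder => hφ <| Derives.mem_logic_of_empty <|
    (Derives.of_mem_logic (hL.neg_neg_imp_mem φ)).mp hL (hder.imp_of_insert hL)
  obtain ⟨Δ, hΔ, hsub⟩ := exists_maxConsistent_superset hcon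
  exact (hΔ.neg_mem_iff hL).1 (hsub (Set.mem_insert _ _))
    ((sat_canonicalModel_iff hL φ ⟨Δ, hΔ⟩).1 (h _ (hC ⟨Δ, hΔ⟩) ⟨Δ, hΔ⟩))

def ValidOn (C : Set KripkeModel) : Set Formula := {φ | ∀ M ∈ C, ∀ w : M.W, M.Sat φ w}

lemma KripkeModel.sat_subst (M : KripkeModel) (σ : ℕ → Formula) (φ : Formula) (w : M.W) :
    M.Sat (subst σ φ) w ↔ { M with val := fun x p => M.Sat (σ p) x }.Sat φ w := by
  induction φ generalizing w with
  | var p => rfl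
  | bot => rfl
  | imp φ ψ ihφ ihψ => simp only [subst, sat_imp, ihφ, ihψ]
  | box φ ih => simp only [subst, sat_box, ih]

lemma KripkeModel.sat_of_tautology (M : KripkeModel) {φ : Formula} (h : Tautology φ) (w : M.W) :
    M.Sat φ w := by
  classical
  simpa using h (fun ψ => decide (M.Sat ψ w)) (decide_eq_false id) fun ψ θ => by
    by_cases hψ : M.Sat ψ w <;> simp [hψ]

lemma isNormal_validOn {C : Set KripkeModel}
    (hC : ∀ M ∈ C, ∀ val : M.W → ℕ → Prop, { M with val := val } ∈ C) :
    IsNormal (ValidOn C) where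
  taut _ h M _ w := M.sat_of_tautology h w
  axK _ _ _ h₁ h₂ x hx := h₁ x hx (h₂ x hx)
  mp _ _ h₁ h₂ M hM w := h₁ M hM w (h₂ M hM w)
  nec _ h M hM _ x _ := h M hM x
  subst_mem φ h σ M hM w := (M.sat_subst σ φ w).2 (h _ (hC M hM fun x p => M.Sat (σ p) x) w)

lemma isNormal_normalExt (X : Set Formula) : IsNormal (NormalExt X) where
  taut φ h _ hL := hL.1.taut φ h
  axK _ hL := hL.1.axK
  mp φ ψ h₁ h₂ L hL := hL.1.mp φ ψ (h₁ L hL) (h₂ L hL)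
  nec φ h L hL := hL.1.nec φ (h L hL)
  subst_mem φ h σ L hL := hL.1.subst_mem φ (h L hL) σ

lemma subset_normalExt (X : Set Formula) : X ⊆ NormalExt X := fun _ hφ _ hL => hL.2 hφ

lemma normalExt_subset {X L : Set Formula} (hL : IsNormal L) (hX : X ⊆ L) : NormalExt X ⊆ L :=
  Set.sInter_subset_of_mem ⟨hL, hX⟩

/-- `sym = false` describes KT and reflexive frames, `sym = true` KTB and reflexive symmetric
frames. -/
def FrameCond {α : Type} (sym : Bool) (R : α → α → Prop) : Prop :=
  (∀ a, R a a) ∧ (sym = true → ∀ a b, R a b → R b a)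

def ModelsT (sym : Bool) : Set KripkeModel := {M | FrameCond sym M.rel}

def LogicT (sym : Bool) : Set Formula := NormalExt (if sym then {axT, axB} else {axT})

lemma isNormal_logicT (sym : Bool) : IsNormal (LogicT sym) := isNormal_normalExt _

lemma axT_mem_logicT (sym : Bool) : axT ∈ LogicT sym := by
  apply subset_normalExt
  cases sym <;> simp

lemma axB_mem_logicT : axB ∈ LogicT true := subset_normalExt _ (by simp)

lemma logicT_subset_validOn (sym : Bool) : LogicT sym ⊆ ValidOn (ModelsT sym) := by
  have hT : axT ∈ ValidOn (ModelsT sym) := fun M hM w h => h w (hM.1 w)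
  refine normalExt_subset (isNormal_validOn fun M hM _ => hM) ?_
  cases sym
  · simpa using hT
  · refine Set.insert_subset hT (Set.singleton_subset_iff.2 fun M hM w hw x hwx => ?_)
    simp only [sat_dia]
    exact ⟨w, hM.2 rfl w x hwx, hw⟩

lemma canonicalModel_mem_modelsT (sym : Bool) (Δ₀ : {Δ // MaxConsistent (LogicT sym) Δ}) :
    canonicalModel (LogicT sym) Δ₀ ∈ ModelsT sym := by
  have hL := isNormal_logicT sym
  refine ⟨fun Δ φ hφ => ?_, fun hsym Δ Θ hΔΘ φ hφ => by_contra fun hφΔ => ?_⟩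
  · have hT : φ.box.imp φ ∈ LogicT sym := by
      simpa [subst, axT] using hL.subst_mem _ (axT_mem_logicT sym) fun _ => φ
    exact (Δ.2.imp_mem_iff hL).1 (Δ.2.mem_of_mem_logic hL hT) hφ
  · subst hsym
    -- axiom B puts `◇¬φ` into `Θ`, while `□φ ∈ Θ` gives `□¬¬φ ∈ Θ`
    have hB : φ.neg.imp φ.neg.dia.box ∈ LogicT true := by
      simpa [subst, axB, Formula.dia, Formula.neg] using
        hL.subst_mem _ axB_mem_logicT fun _ => φ.neg
    have hdia : φ.neg.dia ∈ Θ.1 := hΔΘ _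
      ((Δ.2.imp_mem_iff hL).1 (Δ.2.mem_of_mem_logic hL hB) ((Δ.2.neg_mem_iff hL).2 hφΔ))
    have hnn : φ.imp φ.neg.neg ∈ LogicT true := hL.mem_of_taut fun v h0 himp => by
      simp only [himp, Formula.neg, h0]
      cases v φ <;> simp
    exact (Θ.2.neg_mem_iff hL).1 hdia
      ((Θ.2.imp_mem_iff hL).1 (Θ.2.mem_of_mem_logic hL (hL.box_mono hnn)) hφ)

theorem mem_logicT_iff (sym : Bool) {φ : Formula} :
    φ ∈ LogicT sym ↔ ∀ M ∈ ModelsT sym, ∀ w : M.W, M.Sat φ w :=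
  ⟨fun h => logicT_subset_validOn sym h,
    mem_of_forall_sat (isNormal_logicT sym) (canonicalModel_mem_modelsT sym)⟩

noncomputable def litConj (A B : Finset ℕ) : Formula :=
  (conjList (A.toList.map var)).and (conjList (B.toList.map fun q => (var q).neg))

lemma KripkeModel.sat_litConj {M : KripkeModel} {A B : Finset ℕ} {w : M.W} :
    M.Sat (litConj A B) w ↔ (∀ p ∈ A, M.val w p) ∧ ∀ q ∈ B, ¬ M.val w q := by
  simp [litConj, sat_conjList, KripkeModel.Sat]

lemma pqFormula_litConj (A B : Finset ℕ) : PQFormula A B (litConj A B) := by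
  refine pqFormula_and.2 ⟨pqFormula_conjList ?_, pqFormula_conjList ?_⟩ <;>
    simp [pqFormula_var, pqFormula_neg]

lemma depth_litConj (A B : Finset ℕ) : (litConj A B).depth = 0 := by
  rw [litConj, depth_and]
  refine Nat.le_zero.1 (max_le (depth_conjList_le ?_) (depth_conjList_le ?_)) <;> simp [depth]

noncomputable def charStep (a : Formula) (S : Finset Formula) : Formula :=
  a.and ((conjList (S.toList.map dia)).and (disjList S.toList).box)

lemma KripkeModel.sat_charStep {M : KripkeModel} {a : Formula} {S : Finset Formula} {w : M.W} :
    M.Sat (charStep a S) w ↔ M.Sat a w ∧ (∀ t ∈ S, ∃ x, M.rel w x ∧ M.Sat t x) ∧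
      ∀ x, M.rel w x → ∃ t ∈ S, M.Sat t x := by
  simp [charStep, sat_conjList, sat_disjList]

noncomputable def charSet (P Q : Finset ℕ) : ℕ → Finset Formula
  | 0 => (P.powerset ×ˢ Q.powerset).image fun AB => litConj AB.1 AB.2
  | n + 1 => (charSet P Q 0 ×ˢ (charSet P Q n).powerset).image fun aS => charStep aS.1 aS.2

open Classical in
noncomputable def charFml (M : KripkeModel) (P Q : Finset ℕ) : ℕ → M.W → Formula
  | 0, w => litConj {p ∈ P | M.val w p} {q ∈ Q | ¬ M.val w q}
  | n + 1, w => charStep (charFml M P Q 0 w)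
      {t ∈ charSet P Q n | ∃ x, M.rel w x ∧ charFml M P Q n x = t}

lemma pqFormula_and_depth_le_of_mem_charSet {P Q : Finset ℕ} :
    ∀ {n : ℕ} {t : Formula}, t ∈ charSet P Q n → PQFormula P Q t ∧ t.depth ≤ n
  | 0, t, ht => by
    obtain ⟨⟨A, B⟩, hAB, rfl⟩ := Finset.mem_image.1 (by rwa [charSet] at ht)
    simp only [Finset.mem_product, Finset.mem_powerset] at hAB
    exact ⟨⟨(pqFormula_litConj A B).1.trans hAB.1, (pqFormula_litConj A B).2.trans hAB.2⟩,
      (depth_litConj A B).le⟩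
  | n + 1, t, ht => by
    obtain ⟨⟨a, S⟩, haS, rfl⟩ := Finset.mem_image.1 (by rwa [charSet] at ht)
    simp only [Finset.mem_product, Finset.mem_powerset] at haS
    have ha := pqFormula_and_depth_le_of_mem_charSet haS.1
    have hS : ∀ s ∈ S.toList, PQFormula P Q s ∧ s.depth ≤ n := fun s hs =>
      pqFormula_and_depth_le_of_mem_charSet (haS.2 (Finset.mem_toList.1 hs))
    refine ⟨pqFormula_and.2 ⟨ha.1, pqFormula_and.2 ⟨pqFormula_conjList ?_,
      pqFormula_disjList fun s hs => (hS s hs).1⟩⟩, ?_⟩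
    · simpa [pqFormula_dia] using fun s hs => (hS s hs).1
    · simp only [charStep, depth_and]
      refine max_le (ha.2.trans (n + 1).zero_le) (max_le (depth_conjList_le ?_) ?_)
      · simpa using fun s hs => (hS s hs).2
      · exact Nat.succ_le_succ (depth_disjList_le fun s hs => (hS s hs).2)

section CharFml

variable {M N : KripkeModel} {P Q : Finset ℕ}

open Classical

lemma charFml_mem_charSet : ∀ (n : ℕ) (w : M.W), charFml M P Q n w ∈ charSet P Q n
  | 0, w => by
    rw [charFml, charSet]
    exact Finset.mem_image.2 ⟨(_, _), Finset.mem_product.2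
      ⟨Finset.mem_powerset.2 (Finset.filter_subset _ _),
        Finset.mem_powerset.2 (Finset.filter_subset _ _)⟩, rfl⟩
  | n + 1, w => by
    rw [charFml, charSet]
    exact Finset.mem_image.2 ⟨(_, _), Finset.mem_product.2
      ⟨charFml_mem_charSet 0 w, Finset.mem_powerset.2 (Finset.filter_subset _ _)⟩, rfl⟩

lemma sat_charFml_self : ∀ (n : ℕ) (w : M.W), M.Sat (charFml M P Q n w) w
  | 0, w => by simp [charFml, KripkeModel.sat_litConj]
  | n + 1, w => by
    rw [charFml, KripkeModel.sat_charStep]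
    refine ⟨sat_charFml_self 0 w, fun t ht => ?_, fun x hx => ?_⟩
    · obtain ⟨-, x, hx, rfl⟩ := Finset.mem_filter.1 ht
      exact ⟨x, hx, sat_charFml_self n x⟩
    · exact ⟨_, Finset.mem_filter.2 ⟨charFml_mem_charSet n x, x, hx, rfl⟩,
        sat_charFml_self n x⟩

lemma sat_charFml_zero_of_sat {n : ℕ} {x : M.W} {y : N.W}
    (h : N.Sat (charFml M P Q n x) y) : N.Sat (charFml M P Q 0 x) y := by
  cases n with
  | zero => exact h
  | succ n => rw [charFml, KripkeModel.sat_charStep] at h; exact h.1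

theorem layeredBisim_charFml :
    LayeredBisim P Q M N fun x k y => N.Sat (charFml M P Q k x) y := by
  refine ⟨fun x k y h => ?_, fun x k y h x' hx' => ?_, fun x k y h y' hy' => ?_⟩
  · have h0 := sat_charFml_zero_of_sat h
    simp only [charFml, KripkeModel.sat_litConj, Finset.mem_filter] at h0
    exact ⟨fun p hp hx => h0.1 p ⟨hp, hx⟩, fun q hq hx => h0.2 q ⟨hq, hx⟩⟩
  · simp only [charFml.eq_2, KripkeModel.sat_charStep] at h
    exact h.2.1 _ (Finset.mem_filter.2 ⟨charFml_mem_charSet k x', x', hx', rfl⟩)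
  · simp only [charFml.eq_2, KripkeModel.sat_charStep] at h
    obtain ⟨t, ht, hy't⟩ := h.2.2 y' hy'
    obtain ⟨-, x', hx', rfl⟩ := Finset.mem_filter.1 ht
    exact ⟨x', hx', hy't⟩

end CharFml

theorem LayeredBisim.sat_transfer {A B : Finset ℕ} {M M' : KripkeModel}
    {Z : M.W → ℕ → M'.W → Prop} (hZ : LayeredBisim A B M M' Z) (χ : Formula) :
    ∀ k w w', Z w k w' → χ.depth ≤ k →
      (PQFormula A B χ → M.Sat χ w → M'.Sat χ w') ∧
        (PQFormula B A χ → M'.Sat χ w' → M.Sat χ w) := by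
  obtain ⟨hval, hforth, hback⟩ := hZ
  induction χ with
  | var p =>
    intro k w w' hZ _
    simp only [pqFormula_var]
    exact ⟨fun hp => (hval w k w' hZ).1 p hp,
      fun hp h => by_contra fun hn => (hval w k w' hZ).2 p hp hn h⟩
  | bot => exact fun _ _ _ _ _ => ⟨fun _ => id, fun _ => id⟩
  | imp a b iha ihb =>
    intro k w w' hZ hk
    have ha := iha k w w' hZ (le_of_max_le_left hk)
    have hb := ihb k w w' hZ (le_of_max_le_right hk)
    simp only [pqFormula_imp, sat_imp]
    exact ⟨fun h hab hx => hb.1 h.2 (hab (ha.2 h.1 hx)),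
      fun h hab hx => hb.2 h.2 (hab (ha.1 h.1 hx))⟩
  | box a ih =>
    intro k w w' hZ hk
    obtain ⟨k, rfl⟩ : ∃ j, k = j + 1 := ⟨k - 1, by simp only [depth] at hk; omega⟩
    have hk : a.depth ≤ k := by simpa [depth] using hk
    simp only [pqFormula_box, sat_box]
    refine ⟨fun h hw x' hx' => ?_, fun h hw' x hx => ?_⟩
    · obtain ⟨x, hx, hZx⟩ := hback w k w' hZ x' hx'
      exact (ih k x x' hZx hk).1 h (hw x hx)
    · obtain ⟨x', hx', hZx⟩ := hforth w k w' hZ x hx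
      exact (ih k x x' hZx hk).2 h (hw' x' hx')

theorem LayeredBisim.sat_of_sat {A B : Finset ℕ} {M M' : KripkeModel}
    {Z : M.W → ℕ → M'.W → Prop} (hZ : LayeredBisim A B M M' Z) {χ : Formula} {k : ℕ}
    {w : M.W} {w' : M'.W} (hw : Z w k w') (hk : χ.depth ≤ k) (hχ : PQFormula A B χ)
    (h : M.Sat χ w) : M'.Sat χ w' :=
  (hZ.sat_transfer χ k w w' hw hk).1 hχ h

def frameClosure (sym : Bool) {α : Type} (R : α → α → Prop) (a b : α) : Prop :=
  a = b ∨ R a b ∨ (sym = true ∧ R b a)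

lemma frameCond_frameClosure (sym : Bool) {α : Type} (R : α → α → Prop) :
    FrameCond sym (frameClosure sym R) := by
  refine ⟨fun a => .inl rfl, fun hsym a b hab => ?_⟩
  rcases hab with rfl | h | ⟨-, h⟩
  exacts [.inl rfl, .inr (.inr ⟨hsym, h⟩), .inr (.inl h)]

section Amalgam

variable {M N : KripkeModel} (Z : M.W → ℕ → N.W → Prop)

structure BisimTriple where
  x : M.W
  k : ℕ
  y : N.W
  mem : Z x k y

def AmalgamStep : BisimTriple Z ⊕ N.W → BisimTriple Z ⊕ N.W → Prop
  | .inl s, .inl t => s.k = t.k + 1 ∧ M.rel s.x t.x ∧ N.rel s.y t.y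
  | .inl s, .inr y => s.k = 0 ∧ N.rel s.y y
  | .inr _, .inl _ => False
  | .inr y, .inr y' => N.rel y y'

def amalgamProj : BisimTriple Z ⊕ N.W → N.W := Sum.elim BisimTriple.y id

lemma rel_amalgamProj_of_amalgamStep {s t : BisimTriple Z ⊕ N.W} (h : AmalgamStep Z s t) :
    N.rel (amalgamProj Z s) (amalgamProj Z t) := by
  rcases s with s | y <;> rcases t with t | y'
  exacts [h.2.2, h.2, h.elim, h]

/-- The amalgam of `M` and `N` along `Z`. At a triple `(x, k, y)` a variable takes its value at
`x` if it lies in `Vp ∩ Vn`, at `y` if it lies in neither, and the disjunction (conjunction) of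
the two if it lies only in `Vp` (only in `Vn`): monotonicity then carries `(Vp, Vn)`-formulas
from `x` to the triple, and `Z` carries the consequences of `φ` from the triple to `y`. -/
def amalgam (sym : Bool) (Vp Vn : Finset ℕ) : KripkeModel where
  W := BisimTriple Z ⊕ N.W
  nonempty := N.nonempty.map Sum.inr
  rel := frameClosure sym (AmalgamStep Z)
  val
    | .inl s, p => (M.val s.x p ∧ (p ∈ Vp ∨ N.val s.y p)) ∨ (p ∉ Vn ∧ N.val s.y p)
    | .inr y, p => N.val y p

variable {Z} {sym : Bool} {Vp Vn : Finset ℕ}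

lemma amalgam_val_inl {t : BisimTriple Z} {p : ℕ} : (amalgam Z sym Vp Vn).val (.inl t) p ↔
    (M.val t.x p ∧ (p ∈ Vp ∨ N.val t.y p)) ∨ (p ∉ Vn ∧ N.val t.y p) := Iff.rfl

lemma amalgam_mem_modelsT : amalgam Z sym Vp Vn ∈ ModelsT sym :=
  frameCond_frameClosure sym _

theorem layeredBisim_amalgam_inl {A B : Finset ℕ} (hZ : LayeredBisim A B M N Z)
    (hM : FrameCond sym M.rel) :
    LayeredBisim Vp Vn M (amalgam Z sym Vp Vn)
      fun x j s => ∃ t : BisimTriple Z, s = .inl t ∧ t.x = x ∧ j ≤ t.k := by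
  refine ⟨?_, ?_, ?_⟩
  · rintro x j _ ⟨t, rfl, rfl, -⟩
    simp only [amalgam_val_inl]
    exact ⟨fun p hp hx => .inl ⟨hx, .inl hp⟩,
      fun p hp hx hs => hs.elim (fun h => hx h.1) fun h => h.1 hp⟩
  · rintro x j _ ⟨t, rfl, rfl, hj⟩ x' hx'
    obtain ⟨k, hk⟩ : ∃ k, t.k = k + 1 := ⟨t.k - 1, by omega⟩
    obtain ⟨y', hy', hZ'⟩ := hZ.2.1 t.x k t.y (hk ▸ t.mem) x' hx'
    exact ⟨.inl ⟨x', k, y', hZ'⟩, .inr (.inl ⟨hk, hx', hy'⟩), _, rfl, rfl,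
      show j ≤ k by omega⟩
  · rintro x j _ ⟨t, rfl, rfl, hj⟩ s' hs'
    rcases hs' with rfl | hstep | ⟨hsym, hstep⟩
    · exact ⟨t.x, hM.1 _, t, rfl, rfl, by omega⟩
    · rcases s' with t' | y'
      · exact ⟨t'.x, hstep.2.1, t', rfl, rfl, by have := hstep.1; omega⟩
      · exact absurd hstep.1 (by omega)
    · rcases s' with t' | y'
      · exact ⟨t'.x, hM.2 hsym _ _ hstep.2.1, t', rfl, rfl, by have := hstep.1; omega⟩
      · exact hstep.elim

theorem layeredBisim_amalgam_proj {A B Wp Wn : Finset ℕ} (hZ : LayeredBisim A B M N Z)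
    (hN : FrameCond sym N.rel) (hA : Wp ∩ Vp ⊆ A) (hB : Wn ∩ Vn ⊆ B) :
    LayeredBisim Wp Wn (amalgam Z sym Vp Vn) N fun s _ y => amalgamProj Z s = y := by
  refine ⟨?_, ?_, ?_⟩
  · rintro (t | y) j _ rfl
    · have ht := hZ.1 _ _ _ t.mem
      simp only [amalgam_val_inl]
      refine ⟨fun p hp hs => ?_, fun p hp hs hy => hs ?_⟩
      · rcases hs with ⟨hx, hpV | hy⟩ | ⟨-, hy⟩
        exacts [ht.1 p (hA (Finset.mem_inter.2 ⟨hp, hpV⟩)) hx, hy, hy]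
      · by_cases hpV : p ∈ Vn
        · exact .inl ⟨by_contra fun hx => ht.2 p (hB (Finset.mem_inter.2 ⟨hp, hpV⟩)) hx hy,
            .inr hy⟩
        · exact .inr ⟨hpV, hy⟩
    · exact ⟨fun _ _ => id, fun _ _ => id⟩
  · rintro s j _ rfl s' hs'
    refine ⟨amalgamProj Z s', ?_, rfl⟩
    rcases hs' with rfl | h | ⟨hsym, h⟩
    exacts [hN.1 _, rel_amalgamProj_of_amalgamStep Z h,
      hN.2 hsym _ _ (rel_amalgamProj_of_amalgamStep Z h)]
  · rintro (t | y) j _ rfl y' hy'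
    · cases hk : t.k with
      | zero => exact ⟨.inr y', .inr (.inl ⟨hk, hy'⟩), rfl⟩
      | succ k =>
        obtain ⟨x', hx', hZ'⟩ := hZ.2.2 t.x k t.y (hk ▸ t.mem) y' hy'
        exact ⟨.inl ⟨x', k, y', hZ'⟩, .inr (.inl ⟨hk, hx', hy'⟩), rfl⟩
    · exact ⟨.inr y', .inr (.inl hy'), rfl⟩

end Amalgam

theorem LayeredBisim.sat_of_imp_mem {sym : Bool} {M N : KripkeModel}
    {Z : M.W → ℕ → N.W → Prop} {φ ψ : Formula} {P Q : Finset ℕ}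
    (hZ : LayeredBisim (φ.vpos \ P) (φ.vneg \ Q) M N Z)
    (hM : M ∈ ModelsT sym) (hN : N ∈ ModelsT sym) {w : M.W} {v : N.W} (hwv : Z w φ.depth v)
    (hφ : M.Sat φ w) (hψP : ψ.vpos ∩ P = ∅) (hψQ : ψ.vneg ∩ Q = ∅)
    (hφψ : φ.imp ψ ∈ LogicT sym) : N.Sat ψ v := by
  let S := amalgam Z sym φ.vpos φ.vneg
  let s : S.W := .inl ⟨w, φ.depth, v, hwv⟩
  have hφs : S.Sat φ s := (layeredBisim_amalgam_inl hZ hM).sat_of_sat ⟨_, rfl, rfl, le_rfl⟩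
    le_rfl ⟨subset_rfl, subset_rfl⟩ hφ
  have hψs : S.Sat ψ s := (mem_logicT_iff sym).1 hφψ S amalgam_mem_modelsT s hφs
  have hA : ψ.vpos ∩ φ.vpos ⊆ φ.vpos \ P := fun p hp => by
    have := Finset.eq_empty_iff_forall_notMem.1 hψP p
    grind
  have hB : ψ.vneg ∩ φ.vneg ⊆ φ.vneg \ Q := fun p hp => by
    have := Finset.eq_empty_iff_forall_notMem.1 hψQ p
    grind
  exact (layeredBisim_amalgam_proj hZ hN hA hB).sat_of_sat (k := ψ.depth) rfl le_rfl
    ⟨subset_rfl, subset_rfl⟩ hψs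

section Interpolant

variable (sym : Bool) (φ : Formula) (P Q : Finset ℕ)

open Classical

noncomputable def uniformInterpolant : Formula :=
  disjList {t ∈ charSet (φ.vpos \ P) (φ.vneg \ Q) φ.depth |
    ∃ M ∈ ModelsT sym, ∃ w : M.W, M.Sat φ w ∧
      charFml M (φ.vpos \ P) (φ.vneg \ Q) φ.depth w = t}.toList

lemma sat_uniformInterpolant_iff {N : KripkeModel} {v : N.W} :
    N.Sat (uniformInterpolant sym φ P Q) v ↔ ∃ M ∈ ModelsT sym, ∃ w : M.W, M.Sat φ w ∧
      N.Sat (charFml M (φ.vpos \ P) (φ.vneg \ Q) φ.depth w) v := by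
  simp only [uniformInterpolant, sat_disjList, Finset.mem_toList, Finset.mem_filter]
  constructor
  · rintro ⟨_, ⟨-, M, hM, w, hφ, rfl⟩, hv⟩
    exact ⟨M, hM, w, hφ, hv⟩
  · rintro ⟨M, hM, w, hφ, hv⟩
    exact ⟨_, ⟨charFml_mem_charSet _ w, M, hM, w, hφ, rfl⟩, hv⟩

lemma pqFormula_uniformInterpolant :
    PQFormula (φ.vpos \ P) (φ.vneg \ Q) (uniformInterpolant sym φ P Q) :=
  pqFormula_disjList fun _ ht => (pqFormula_and_depth_le_of_mem_charSet
    (Finset.mem_of_mem_filter _ (Finset.mem_toList.1 ht))).1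

lemma depth_uniformInterpolant_le : (uniformInterpolant sym φ P Q).depth ≤ φ.depth :=
  depth_disjList_le fun _ ht => (pqFormula_and_depth_le_of_mem_charSet
    (Finset.mem_of_mem_filter _ (Finset.mem_toList.1 ht))).2

theorem isULInterpolant_uniformInterpolant :
    IsULInterpolant (LogicT sym) φ P Q (uniformInterpolant sym φ P Q) := by
  obtain ⟨hpos, hneg⟩ := pqFormula_uniformInterpolant sym φ P Q
  refine ⟨hpos, hneg, (mem_logicT_iff sym).2 fun M hM w hφ => ?_,
    fun ψ hψP hψQ hφψ => (mem_logicT_iff sym).2 fun N hN v hθ => ?_⟩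
  · exact (sat_uniformInterpolant_iff sym φ P Q).2 ⟨M, hM, w, hφ, sat_charFml_self _ w⟩
  · obtain ⟨M, hM, w, hφ, hv⟩ := (sat_uniformInterpolant_iff sym φ P Q).1 hθ
    exact layeredBisim_charFml.sat_of_imp_mem hM hN hv hφ hψP hψQ hφψ

end Interpolant

theorem ulip_logicT (sym : Bool) :
    ULIP (LogicT sym) ∧ ∀ (φ : Formula) (P Q : Finset ℕ), ∃ θ : Formula,
      IsULInterpolant (LogicT sym) φ P Q θ ∧ θ.depth ≤ φ.depth :=
  ⟨fun φ P Q => ⟨_, isULInterpolant_uniformInterpolant sym φ P Q⟩, fun φ P Q =>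
    ⟨_, isULInterpolant_uniformInterpolant sym φ P Q, depth_uniformInterpolant_le sym φ P Q⟩⟩

/-- KT and KTB enjoy ULIP, with interpolants of depth at most d(φ). -/
theorem ulip_KT_KTB :
    (ULIP TheoryKT ∧ ∀ (φ : Formula) (P Q : Finset ℕ), ∃ θ : Formula,
        IsULInterpolant TheoryKT φ P Q θ ∧ θ.depth ≤ φ.depth) ∧
    (ULIP TheoryKTB ∧ ∀ (φ : Formula) (P Q : Finset ℕ), ∃ θ : Formula,
        IsULInterpolant TheoryKTB φ P Q θ ∧ θ.depth ≤ φ.depth) :=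
  ⟨ulip_logicT false, ulip_logicT true⟩
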